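/- arXiv:2506.04935 — 7 statements merged into one kernel-verified Lean document; each statement's English description precedes it below -/
import Mathlib

section
/- Let S be a string and R an aperiodic substring of S (i.e., the smallest period of R is strictly greater than |R|/2). For any three distinct occurrences of R in S starting at positions x < y < z, we have z > x + |R|. -/
open Classical

/-- `p` is a period of the string (list) `P`. -/
def IsPeriodOf {α : Type*} (P : List α) (p : ℕ) : Prop :=
  0 < p ∧ ∀ i, i + p < P.length → P[i]? = P[i + p]?

/-- The smallest period of `P`. -/
noncomputable def minPeriod {α : Type*} (P : List α) : ℕ := sInf {p | IsPeriodOf P p}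

/-- `P` is periodic if its smallest period is at most `|P|/2`. -/
def ListPeriodic {α : Type*} (P : List α) : Prop := 2 * minPeriod P ≤ P.length

/-- `P` occurs in `S` starting at position `i`. -/
def OccursAt {α : Type*} (P S : List α) (i : ℕ) : Prop :=
  i + P.length ≤ S.length ∧ (S.drop i).take P.length = P

/-- The set of starting positions of occurrences of `P` in `S`. -/
noncomputable def occ {α : Type*} (P S : List α) : Finset ℕ :=
  (Finset.range (S.length + 1)).filter (fun i => OccursAt P S i)

/-- Hamming distance between two (equal-length) strings. -/
noncomputable def hamming {α : Type*} (S T : List α) : ℕ :=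
  ((List.range S.length).filter (fun i => S[i]? ≠ T[i]?)).length

/-- `P` is `(τ,k)`-resilient in `S`. -/
def Resilient {α : Type*} (P S : List α) (τ k : ℕ) : Prop :=
  ∀ S' : List α, S'.length = S.length → hamming S S' ≤ k → τ ≤ (occ P S').card

/-- The fragment `S[x..y]` (inclusive). -/
def frag {α : Type*} (S : List α) (x y : ℕ) : List α := (S.drop x).take (y - x + 1)

/-- The fragment `S[x..y]` is a run of `S`. -/
def IsRun {α : Type*} (S : List α) (x y : ℕ) : Prop :=
  x ≤ y ∧ y < S.length ∧ 2 * minPeriod (frag S x y) ≤ y - x + 1 ∧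
  (0 < x → ¬ IsPeriodOf (frag S (x - 1) y) (minPeriod (frag S x y))) ∧
  (y + 1 < S.length → ¬ IsPeriodOf (frag S x (y + 1)) (minPeriod (frag S x y)))

theorem OccursAt.getElem?_eq {α : Type*} {R S : List α} {x : ℕ} (h : OccursAt R S x)
    {i : ℕ} (hi : i < R.length) : R[i]? = S[x + i]? := by
  conv_lhs => rw [← h.2]
  simp [List.getElem?_drop, hi]

theorem OccursAt.isPeriodOf_sub {α : Type*} {R S : List α} {x y : ℕ}
    (hx : OccursAt R S x) (hy : OccursAt R S y) (hxy : x < y) :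
    IsPeriodOf R (y - x) := by
  refine ⟨Nat.sub_pos_of_lt hxy, fun i hi => ?_⟩
  rw [hy.getElem?_eq (by omega), hx.getElem?_eq hi]
  congr 1
  omega

theorem minPeriod_le {α : Type*} {P : List α} {p : ℕ} (h : IsPeriodOf P p) :
    minPeriod P ≤ p :=
  Nat.sInf_le h

theorem stmt1 {α : Type*} (S R : List α) (hap : ¬ ListPeriodic R)
    (x y z : ℕ) (hx : OccursAt R S x) (hy : OccursAt R S y) (hz : OccursAt R S z)
    (hxy : x < y) (hyz : y < z) :
    x + R.length < z := by
  have hper : R.length < 2 * minPeriod R := Nat.lt_of_not_le hap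
  have hxy' : minPeriod R ≤ y - x := minPeriod_le (hx.isPeriodOf_sub hy hxy)
  have hyz' : minPeriod R ≤ z - y := minPeriod_le (hy.isPeriodOf_sub hz hyz)
  omega
end

section
/- Let S be a string and suppose there are three runs S[i..i'], S[j..j'], S[k..k'] of S with the same period, where i < j < k. Then k > i'. -/
open Classical

/-!
Two runs with the same period `p` overlap in fewer than `p` positions: otherwise the earlier run
would extend the later one to the left. So the run `S[j..j']` shares fewer than `p` positions with
each of its neighbours `S[i..i']` and `S[k..k']`, while its own length is at least `2p`; hence the
outer runs cannot meet.
-/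

section

variable {α : Type*}

lemma frag_length_of_le {S : List α} {x y : ℕ} (hxy : x ≤ y) (hy : y < S.length) :
    (frag S x y).length = y - x + 1 := by
  simp only [frag, List.length_take, List.length_drop]
  omega

lemma frag_getElem? {S : List α} {x y n : ℕ} (hn : n ≤ y - x) :
    (frag S x y)[n]? = S[x + n]? := by
  rw [frag, List.getElem?_take_of_lt (by omega), List.getElem?_drop]

lemma isPeriodOf_frag_iff {S : List α} {x y p : ℕ} (hxy : x ≤ y) (hy : y < S.length) :
    IsPeriodOf (frag S x y) p ↔ 0 < p ∧ ∀ n, x ≤ n → n + p ≤ y → S[n]? = S[n + p]? := by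
  rw [IsPeriodOf, frag_length_of_le hxy hy]
  refine and_congr_right fun _ => ⟨fun h n hxn hny => ?_, fun h m hm => ?_⟩
  · have := h (n - x) (by omega)
    rwa [frag_getElem? (by omega), frag_getElem? (by omega), Nat.add_sub_cancel' hxn,
      show x + (n - x + p) = n + p by omega] at this
  · rw [frag_getElem? (by omega), frag_getElem? (by omega), ← Nat.add_assoc]
    exact h _ (by omega) (by omega)

lemma isPeriodOf_minPeriod (P : List α) : IsPeriodOf P (minPeriod P) :=
  Nat.sInf_mem (s := {p | IsPeriodOf P p}) ⟨P.length + 1, by omega, fun _ _ => by omega⟩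

lemma IsRun.overlap_lt_minPeriod {S : List α} {a a' b b' : ℕ}
    (ha : IsRun S a a') (hb : IsRun S b b') (hab : a < b)
    (hp : minPeriod (frag S a a') = minPeriod (frag S b b')) :
    a' + 1 < b + minPeriod (frag S b b') := by
  obtain ⟨haa', ha', -, -, -⟩ := ha
  obtain ⟨hbb', hb', -, hleft, -⟩ := hb
  set p := minPeriod (frag S b b')
  obtain ⟨hp0, hper_a⟩ := (isPeriodOf_frag_iff haa' ha').1 (hp ▸ isPeriodOf_minPeriod _)
  obtain ⟨-, hper_b⟩ := (isPeriodOf_frag_iff hbb' hb').1 (isPeriodOf_minPeriod _)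
  by_contra! hov
  -- `S[b-1] = S[b-1+p]` comes from the first run, which covers both positions.
  refine hleft (by omega) ((isPeriodOf_frag_iff (by omega) hb').2 ⟨hp0, fun n hn hnp => ?_⟩)
  rcases (show n = b - 1 ∨ b ≤ n by omega) with rfl | hbn
  · exact hper_a _ (by omega) (by omega)
  · exact hper_b n hbn hnp

end

theorem stmt5 {α : Type*} (S : List α) (i i' j j' k k' : ℕ)
    (h1 : IsRun S i i') (h2 : IsRun S j j') (h3 : IsRun S k k')
    (hij : i < j) (hjk : j < k)
    (hp1 : minPeriod (frag S i i') = minPeriod (frag S j j'))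
    (hp2 : minPeriod (frag S j j') = minPeriod (frag S k k')) :
    i' < k := by
  have hleft := h1.overlap_lt_minPeriod h2 hij hp1
  have hright := h2.overlap_lt_minPeriod h3 hjk hp2
  rw [← hp2] at hright
  obtain ⟨hjj', -, hlong, -, -⟩ := h2
  omega
end

section
/- Let T = U·P·V be a string over an alphabet Σ with |Σ| ≥ 3, where P is a non-empty string occurring exactly once in T, and |U| < |P| and |V| < |P|. Then there exists a string P' over Σ with Hamming distance d_H(P,P') = 1 such that P does not occur in T' = U·P'·V. -/
open Classical

/-!
Replace the last letter `a` of the occurrence of `P` by some `c ≠ a`. A new occurrence must cover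
the changed position `k`, at a shift `d ≥ 1` with `P[|P| - 1 - d] = c`, so distinct letters give
distinct shifts. Two shifts `d₁ < d₂` cannot coexist: reading `P` through the three overlapping
windows gives `P[|P| - 1 - d₂] = a`, so the window at shift `d₂` was already an occurrence in `T`,
against uniqueness. Hence of two letters different from `a`, one creates no occurrence.
-/

theorem occursAt_iff_getElem? {α : Type*} {P S : List α} {i : ℕ} :
    OccursAt P S i ↔ i + P.length ≤ S.length ∧ ∀ t < P.length, S[i + t]? = P[t]? := by
  refine and_congr_right fun hi => ⟨fun h t ht => ?_, fun h => List.ext_getElem? fun t => ?_⟩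
  · rw [← h, List.getElem?_take_of_lt ht, List.getElem?_drop]
  · by_cases ht : t < P.length
    · rw [List.getElem?_take_of_lt ht, List.getElem?_drop, h t ht]
    · rw [List.getElem?_eq_none (by simp; omega), List.getElem?_eq_none (by omega)]

namespace OccursAt

variable {α : Type*} {P S : List α} {i j k : ℕ} {c : α}

theorem getElem?_eq_s6 (h : OccursAt P S i) (hij : i ≤ j) (hj : j < i + P.length) :
    S[j]? = P[j - i]? := by
  rw [← (occursAt_iff_getElem?.1 h).2 (j - i) (by omega), Nat.add_sub_cancel' hij]

theorem of_set (h : OccursAt P (S.set k c) i)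
    (hk : i ≤ k → k < i + P.length → S[k]? = P[k - i]?) : OccursAt P S i := by
  obtain ⟨hlen, hmatch⟩ := occursAt_iff_getElem?.1 h
  refine occursAt_iff_getElem?.2 ⟨by simpa using hlen, fun t ht => ?_⟩
  by_cases htk : i + t = k
  · subst htk
    simpa using hk (by omega) (by omega)
  · rw [← List.getElem?_set_ne (Ne.symm htk) (a := c), hmatch t ht]

theorem getElem?_sub_eq_of_set (h : OccursAt P (S.set k c) i) (hik : i ≤ k)
    (hk : k < i + P.length) : P[k - i]? = some c := by
  have hkS : k < S.length := by have := h.1; simp at this; omega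
  rw [← h.getElem?_eq_s6 hik hk, List.getElem?_set_self hkS]

end OccursAt

theorem mem_occ_iff {α : Type*} {P S : List α} {i : ℕ} : i ∈ occ P S ↔ OccursAt P S i := by
  unfold occ
  rw [Finset.mem_filter, Finset.mem_range]
  exact ⟨And.right, fun h => ⟨by have := h.1; omega, h⟩⟩

theorem occ_eq_empty_iff {α : Type*} {P S : List α} : occ P S = ∅ ↔ ∀ i, ¬ OccursAt P S i := by
  simp [Finset.eq_empty_iff_forall_notMem, mem_occ_iff]

theorem hamming_set_eq_one {α : Type*} {P : List α} {k : ℕ} {c : α} (hk : k < P.length)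
    (hc : P[k]? ≠ some c) : hamming P (P.set k c) = 1 := by
  classical
  unfold hamming
  have hfilter : (List.range P.length).filter (fun i => P[i]? ≠ (P.set k c)[i]?) =
      (List.range P.length).filter (fun i => i = k) := by
    refine List.filter_congr fun i _ => ?_
    by_cases hi : i = k
    · subst hi
      simpa [List.getElem?_set_self hk] using hc
    · simp [List.getElem?_set_ne (Ne.symm hi), hi]
  rw [hfilter, List.filter_eq, List.count_range, if_pos hk, List.length_replicate]

theorem exists_pair_ne_of_three_le_card {α : Type*} [Fintype α] (h : 3 ≤ Fintype.card α) (a : α) :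
    ∃ c₁ c₂ : α, c₁ ≠ a ∧ c₂ ≠ a ∧ c₁ ≠ c₂ := by
  classical
  obtain ⟨c₁, h₁, c₂, h₂, h₁₂⟩ : ∃ c₁ ∈ Finset.univ.erase a, ∃ c₂ ∈ Finset.univ.erase a, c₁ ≠ c₂ := by
    rw [← Finset.one_lt_card, Finset.card_erase_of_mem (Finset.mem_univ a), Finset.card_univ]
    omega
  exact ⟨c₁, c₂, Finset.ne_of_mem_erase h₁, Finset.ne_of_mem_erase h₂, h₁₂⟩

section SubstituteLast

variable {α : Type*} {P T : List α} {u k : ℕ} {c c₁ c₂ : α}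

theorem lt_and_le_and_getElem?_sub_eq_of_occursAt_set (hP : 0 < P.length) (hu : OccursAt P T u)
    (huniq : ∀ i, OccursAt P T i → i = u) (hk : k + 1 = u + P.length) (hc : T[k]? ≠ some c)
    {i : ℕ} (h : OccursAt P (T.set k c) i) : u < i ∧ i ≤ k ∧ P[k - i]? = some c := by
  have hcover : i ≤ k ∧ k < i + P.length := by
    by_contra hout
    have := huniq i (h.of_set fun h₁ h₂ => absurd ⟨h₁, h₂⟩ hout)
    omega
  have hforced := h.getElem?_sub_eq_of_set hcover.1 hcover.2
  have hiu : i ≠ u := by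
    rintro rfl
    exact hc (hu.getElem?_eq_s6 hcover.1 hcover.2 ▸ hforced)
  exact ⟨by omega, hcover.1, hforced⟩

/-- The original letter at `k` is read off through the positions `k + (i₁ - u)` (covered by the
windows at `i₁` and `i₂`, where both substituted texts agree) and `i₁ + (k - i₂)`. -/
theorem occursAt_of_occursAt_set_of_occursAt_set (hu : OccursAt P T u)
    (hk : k + 1 = u + P.length) {i₁ i₂ : ℕ} (hui₁ : u < i₁) (hi₁₂ : i₁ < i₂) (hi₂k : i₂ ≤ k)
    (h₁ : OccursAt P (T.set k c₁) i₁) (h₂ : OccursAt P (T.set k c₂) i₂) : OccursAt P T i₂ := by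
  refine h₂.of_set fun _ _ => ?_
  set j := i₁ + (k - i₂)
  set m := k + (i₁ - u)
  calc T[k]? = P[k - u]? := hu.getElem?_eq_s6 (by omega) (by omega)
    _ = P[m - i₁]? := by congr 1; omega
    _ = (T.set k c₁)[m]? := (h₁.getElem?_eq_s6 (by omega) (by omega)).symm
    _ = (T.set k c₂)[m]? := by rw [List.getElem?_set_ne (by omega), List.getElem?_set_ne (by omega)]
    _ = P[j - u]? := by rw [h₂.getElem?_eq_s6 (by omega) (by omega)]; congr 1; omega
    _ = T[j]? := (hu.getElem?_eq_s6 (by omega) (by omega)).symm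
    _ = (T.set k c₁)[j]? := (List.getElem?_set_ne (by omega)).symm
    _ = P[k - i₂]? := by rw [h₁.getElem?_eq_s6 (by omega) (by omega)]; congr 1; omega

theorem eq_of_occursAt_set_of_occursAt_set (hP : 0 < P.length) (hu : OccursAt P T u)
    (huniq : ∀ i, OccursAt P T i → i = u) (hk : k + 1 = u + P.length)
    (hc₁ : T[k]? ≠ some c₁) (hc₂ : T[k]? ≠ some c₂) {i₁ i₂ : ℕ}
    (h₁ : OccursAt P (T.set k c₁) i₁) (h₂ : OccursAt P (T.set k c₂) i₂) : c₁ = c₂ := by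
  obtain ⟨hui₁, hi₁k, hP₁⟩ := lt_and_le_and_getElem?_sub_eq_of_occursAt_set hP hu huniq hk hc₁ h₁
  obtain ⟨hui₂, hi₂k, hP₂⟩ := lt_and_le_and_getElem?_sub_eq_of_occursAt_set hP hu huniq hk hc₂ h₂
  rcases lt_trichotomy i₁ i₂ with hlt | rfl | hgt
  · have := huniq i₂ (occursAt_of_occursAt_set_of_occursAt_set hu hk hui₁ hlt hi₂k h₁ h₂)
    omega
  · exact Option.some_injective _ (hP₁.symm.trans hP₂)
  · have := huniq i₁ (occursAt_of_occursAt_set_of_occursAt_set hu hk hui₂ hgt hi₁k h₂ h₁)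
    omega

end SubstituteLast

theorem stmt6_general {α : Type*} [Fintype α] (hcard : 3 ≤ Fintype.card α)
    (U P V : List α) (hP : P ≠ [])
    (honce : (occ P (U ++ P ++ V)).card = 1) :
    ∃ P' : List α, P'.length = P.length ∧ hamming P P' = 1 ∧
      occ P (U ++ P' ++ V) = ∅ := by
  set T := U ++ P ++ V
  set k := U.length + (P.length - 1)
  have hP₀ : 0 < P.length := List.length_pos_iff.2 hP
  have hu : OccursAt P T U.length := occursAt_iff_getElem?.2
    ⟨by simp [T], fun t _ => by simp [T, List.getElem?_append_right, List.getElem?_append_left, *]⟩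
  have huniq : ∀ i, OccursAt P T i → i = U.length := fun i hi =>
    Finset.card_le_one.1 honce.le i (mem_occ_iff.2 hi) _ (mem_occ_iff.2 hu)
  obtain ⟨a, ha⟩ : ∃ a, P[P.length - 1]? = some a := Option.isSome_iff_exists.1 (by simp; omega)
  have hTk : T[k]? = some a := by rw [hu.getElem?_eq_s6 (by omega) (by omega), ← ha]; congr 1; omega
  have hsubst : ∀ c, U ++ P.set (P.length - 1) c ++ V = T.set k c := fun c => by
    simp only [T, k, List.append_assoc]
    rw [List.set_append_right _ _ (by omega), List.set_append, if_pos (by omega),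
      Nat.add_sub_cancel_left]
  obtain ⟨c₁, c₂, hc₁, hc₂, hc₁₂⟩ := exists_pair_ne_of_three_le_card hcard a
  have hfree : ∃ c, c ≠ a ∧ ∀ i, ¬ OccursAt P (T.set k c) i := by
    by_contra! hall
    obtain ⟨i₁, h₁⟩ := hall c₁ hc₁
    obtain ⟨i₂, h₂⟩ := hall c₂ hc₂
    exact hc₁₂ (eq_of_occursAt_set_of_occursAt_set hP₀ hu huniq (by omega)
      (by simpa [hTk] using hc₁.symm) (by simpa [hTk] using hc₂.symm) h₁ h₂)
  obtain ⟨c, hca, hno⟩ := hfree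
  refine ⟨P.set (P.length - 1) c, List.length_set, hamming_set_eq_one (by omega) ?_, ?_⟩
  · simpa [ha] using hca.symm
  · rw [hsubst, occ_eq_empty_iff]
    exact hno

theorem stmt6 {α : Type*} [Fintype α] (hcard : 3 ≤ Fintype.card α)
    (U P V : List α) (hP : P ≠ [])
    (hU : U.length < P.length) (hV : V.length < P.length)
    (honce : (occ P (U ++ P ++ V)).card = 1) :
    ∃ P' : List α, P'.length = P.length ∧ hamming P P' = 1 ∧
      occ P (U ++ P' ++ V) = ∅ :=
  stmt6_general hcard U P V hP honce
end

section
/- Let T = U·V·P be a string over an alphabet Σ with |Σ| ≥ 3, such that P is non-empty, the only occurrences of P in T are as a prefix and as a suffix of V·P, 1 ≤ |V| < |P|, and |U| < |P|. Then there exists a string V' over Σ with d_H(V,V') = 1 such that P occurs exactly once in T' = U·V'·P. -/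
open Classical

/-!
Substitute, at the start `j` of an occurrence of `P`, a letter `c` different from `S[j] = P[0]`.
Occurrences whose window avoids `j` are unaffected, and the one at `j` is destroyed. A new
occurrence must start at some `i < j` where `S` already matches `P` except at `j`, and then
`c = P[j - i]`. There is at most one such `i`: if `i₂ < i₁` both qualify, comparing the near
occurrence at `i₁` with the occurrence at `j` and then with the near occurrence at `i₂` gives
`S[j] = P[0] = P[j - i₂]`, i.e. `i₂` was an occurrence overlapping `j`. Hence at most two
letters are forbidden, and a third one is available.
-/

section Occurrences

variable {α : Type*} {P S : List α}

lemma mem_occ_iff_s7 {i : ℕ} :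
    i ∈ occ P S ↔ i + P.length ≤ S.length ∧ ∀ x < P.length, S[i + x]? = P[x]? := by
  rw [occ, Finset.mem_filter, Finset.mem_range, OccursAt]
  constructor
  · rintro ⟨-, hlen, htake⟩
    refine ⟨hlen, fun x hx => ?_⟩
    rw [← htake, List.getElem?_take_of_lt hx, List.getElem?_drop]
  · rintro ⟨hlen, hmatch⟩
    refine ⟨by omega, hlen, List.ext_getElem? fun x => ?_⟩
    rw [List.getElem?_take, List.getElem?_drop]
    split_ifs with hx
    · exact hmatch x hx
    · exact (List.getElem?_eq_none (by omega)).symm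

def MatchesAtExcept (P S : List α) (i j : ℕ) : Prop :=
  ∀ x < P.length, i + x ≠ j → S[i + x]? = P[x]?

lemma mem_occ_set_iff_of_not_covers {i j : ℕ} {c : α} (hcov : ¬(i ≤ j ∧ j < i + P.length)) :
    i ∈ occ P (S.set j c) ↔ i ∈ occ P S := by
  have hsame : ∀ x < P.length, (S.set j c)[i + x]? = S[i + x]? := fun x hx =>
    List.getElem?_set_ne (by omega)
  simp only [mem_occ_iff_s7, List.length_set]
  exact and_congr_right fun _ => forall₂_congr fun x hx => by rw [hsame x hx]

lemma matchesAtExcept_of_mem_occ_set {i j : ℕ} {c : α} (h : i ∈ occ P (S.set j c)) :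
    MatchesAtExcept P S i j := fun x hx hxj => by
  rw [← List.getElem?_set_ne (Ne.symm hxj) (a := c)]
  exact (mem_occ_iff_s7.1 h).2 x hx

lemma getElem?_sub_eq_of_mem_occ_set {i j : ℕ} {c : α} (h : i ∈ occ P (S.set j c))
    (hij : i ≤ j) (hjP : j < i + P.length) (hjS : j < S.length) : P[j - i]? = some c := by
  have := (mem_occ_iff_s7.1 h).2 (j - i) (by omega)
  rw [Nat.add_sub_cancel' hij, List.getElem?_set_self hjS] at this
  exact this.symm

lemma getElem?_eq_of_matchesAtExcept_of_lt {i₁ i₂ j : ℕ} (hj : j ∈ occ P S)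
    (h₁ : MatchesAtExcept P S i₁ j) (h₂ : MatchesAtExcept P S i₂ j)
    (h₁₂ : i₂ < i₁) (h₁j : i₁ < j) (hwin : j < i₂ + P.length) :
    S[j]? = P[j - i₂]? := by
  have hocc := (mem_occ_iff_s7.1 hj).2
  calc S[j]? = P[0]? := by simpa using hocc 0 (by omega)
    _ = S[i₁]? := by simpa using (h₁ 0 (by omega) (by omega)).symm
    _ = P[i₁ - i₂]? := by
      simpa [Nat.add_sub_cancel' h₁₂.le] using h₂ (i₁ - i₂) (by omega) (by omega)
    _ = S[j + (i₁ - i₂)]? := (hocc _ (by omega)).symm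
    _ = P[j - i₂]? := by
      rw [show j + (i₁ - i₂) = i₁ + (j - i₂) by omega]
      exact h₁ _ (by omega) (by omega)

lemma mem_occ_of_matchesAtExcept {i j : ℕ} (h : MatchesAtExcept P S i j)
    (hlen : i + P.length ≤ S.length) (hj : S[j]? = P[j - i]?) : i ∈ occ P S := by
  refine mem_occ_iff_s7.2 ⟨hlen, fun x hx => ?_⟩
  by_cases hxj : i + x = j
  · rw [hxj, hj, ← hxj, Nat.add_sub_cancel_left]
  · exact h x hx hxj

lemma eq_of_matchesAtExcept {i₁ i₂ j : ℕ} (hj : j ∈ occ P S)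
    (hleft : ∀ i ∈ occ P S, i < j → i + P.length ≤ j)
    (h₁ : MatchesAtExcept P S i₁ j) (h₂ : MatchesAtExcept P S i₂ j)
    (h₁j : i₁ < j) (h₂j : i₂ < j)
    (hwin₁ : j < i₁ + P.length) (hwin₂ : j < i₂ + P.length) :
    i₁ = i₂ := by
  have hlen := (mem_occ_iff_s7.1 hj).1
  have no_nested_pair : ∀ {k l : ℕ}, MatchesAtExcept P S k j → MatchesAtExcept P S l j →
      l < k → k < j → j < l + P.length → False := fun hk hl hlk hkj hwin =>
    absurd (hleft _ (mem_occ_of_matchesAtExcept hl (by omega)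
      (getElem?_eq_of_matchesAtExcept_of_lt hj hk hl hlk hkj hwin)) (by omega)) (by omega)
  rcases lt_trichotomy i₁ i₂ with h | h | h
  · exact (no_nested_pair h₂ h₁ h h₂j hwin₁).elim
  · exact h
  · exact (no_nested_pair h₁ h₂ h h₁j hwin₂).elim

lemma notMem_occ_set_of_covers {i j : ℕ} {c : α} (hj : j ∈ occ P S) (hcj : S[j]? ≠ some c)
    (hnear : ∀ i < j, j < i + P.length → MatchesAtExcept P S i j → P[j - i]? ≠ some c)
    (hij : i ≤ j) (hjP : j < i + P.length) : i ∉ occ P (S.set j c) := fun h => by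
  obtain ⟨hlen, hocc⟩ := mem_occ_iff_s7.1 hj
  have hPc := getElem?_sub_eq_of_mem_occ_set h hij hjP (by omega)
  rcases hij.lt_or_eq with hlt | rfl
  · exact hnear i hlt hjP (matchesAtExcept_of_mem_occ_set h) hPc
  · rw [Nat.sub_self] at hPc
    exact hcj (by simpa [hPc] using hocc 0 (by omega))

end Occurrences

lemma exists_ne_ne_of_three_le_card {α : Type*} [Fintype α] (hcard : 3 ≤ Fintype.card α)
    (a b : α) : ∃ c, c ≠ a ∧ c ≠ b := by
  have hlt : ({a, b} : Finset α).card < (Finset.univ : Finset α).card :=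
    Finset.card_le_two.trans_lt (by rw [Finset.card_univ]; omega)
  obtain ⟨c, -, hc⟩ := Finset.exists_mem_notMem_of_card_lt_card hlt
  simp only [Finset.mem_insert, Finset.mem_singleton, not_or] at hc
  exact ⟨c, hc⟩

lemma hamming_set_eq_one_s7 {α : Type*} {S : List α} {j : ℕ} {c : α} (hj : j < S.length)
    (hc : S[j]? ≠ some c) : hamming S (S.set j c) = 1 := by
  have hdiff : ∀ i ∈ List.range S.length,
      decide (S[i]? ≠ (S.set j c)[i]?) = decide (i = j) := fun i _ => by
    by_cases hij : i = j
    · subst hij; simpa [List.getElem?_set_self hj] using hc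
    · simp [List.getElem?_set_ne (Ne.symm hij), hij]
  rw [hamming, List.filter_congr hdiff, List.filter_eq, List.length_replicate,
    List.count_eq_one_of_mem List.nodup_range (List.mem_range.2 hj)]

theorem exists_occ_set_eq_erase {α : Type*} [Fintype α] (hcard : 3 ≤ Fintype.card α)
    {P S : List α} (hP : P ≠ []) {j : ℕ} (hj : j ∈ occ P S)
    (hleft : ∀ i ∈ occ P S, i < j → i + P.length ≤ j) :
    ∃ c, S[j]? ≠ some c ∧ occ P (S.set j c) = (occ P S).erase j := by
  have hPpos := List.length_pos_iff.2 hP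
  obtain ⟨a, ha⟩ : ∃ a, S[j]? = some a :=
    ⟨_, List.getElem?_eq_getElem (by have := (mem_occ_iff_s7.1 hj).1; omega)⟩
  obtain ⟨b, hb⟩ : ∃ b : α, ∀ i < j, j < i + P.length → MatchesAtExcept P S i j →
      P[j - i]? = some b := by
    by_cases hnear : ∃ i < j, j < i + P.length ∧ MatchesAtExcept P S i j
    · obtain ⟨i₀, hi₀, hwin₀, hm₀⟩ := hnear
      refine ⟨P[j - i₀], fun i hi hwin hm => ?_⟩
      rw [eq_of_matchesAtExcept hj hleft hm hm₀ hi hi₀ hwin hwin₀]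
      exact List.getElem?_eq_getElem _
    · simp only [not_exists, not_and] at hnear
      exact ⟨a, fun i hi hwin hm => absurd hm (hnear i hi hwin)⟩
  obtain ⟨c, hca, hcb⟩ := exists_ne_ne_of_three_le_card hcard a b
  have hcj : S[j]? ≠ some c := by simpa [ha] using hca.symm
  refine ⟨c, hcj, Finset.ext fun i => ?_⟩
  rw [Finset.mem_erase]
  by_cases hcov : i ≤ j ∧ j < i + P.length
  · refine iff_of_false (notMem_occ_set_of_covers hj hcj ?_ hcov.1 hcov.2)
      fun ⟨hne, h⟩ => absurd (hleft i h (by omega)) (by omega)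
    intro i hi hwin hm
    simpa [hb i hi hwin hm] using hcb.symm
  · rw [mem_occ_set_iff_of_not_covers hcov]
    exact ⟨fun h => ⟨by omega, h⟩, And.right⟩

theorem stmt7_general {α : Type*} [Fintype α] (hcard : 3 ≤ Fintype.card α)
    (U V P : List α) (hP : P ≠ [])
    (hV1 : 1 ≤ V.length)
    (hocc : occ P (U ++ V ++ P) = {U.length, U.length + V.length}) :
    ∃ V' : List α, V'.length = V.length ∧ hamming V V' = 1 ∧
      (occ P (U ++ V' ++ P)).card = 1 := by
  have hV0 : (U ++ V ++ P)[U.length]? = V[0]? := by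
    rw [List.append_assoc, List.getElem?_append_right le_rfl, Nat.sub_self,
      List.getElem?_append_left (by omega)]
  have hset : ∀ c, (U ++ V ++ P).set U.length c = U ++ V.set 0 c ++ P := fun c => by
    rw [List.set_append_left _ _ (by simp; omega), List.set_append_right _ _ le_rfl, Nat.sub_self]
  obtain ⟨c, hc, hsub⟩ := exists_occ_set_eq_erase (S := U ++ V ++ P) (j := U.length) hcard hP
    (by rw [hocc]; exact Finset.mem_insert_self _ _)
    (fun i hi hlt => by simp only [hocc, Finset.mem_insert, Finset.mem_singleton] at hi; omega)
  refine ⟨V.set 0 c, List.length_set .., hamming_set_eq_one_s7 (by omega) (hV0 ▸ hc), ?_⟩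
  rw [← hset, hsub, hocc, Finset.erase_insert (by rw [Finset.mem_singleton]; omega),
    Finset.card_singleton]

theorem stmt7 {α : Type*} [Fintype α] (hcard : 3 ≤ Fintype.card α)
    (U V P : List α) (hP : P ≠ [])
    (hV1 : 1 ≤ V.length) (hVP : V.length < P.length) (hU : U.length < P.length)
    (hocc : occ P (U ++ V ++ P) = {U.length, U.length + V.length}) :
    ∃ V' : List α, V'.length = V.length ∧ hamming V V' = 1 ∧
      (occ P (U ++ V' ++ P)).card = 1 :=
  stmt7_general hcard U V P hP hV1 hocc
end

section
/- Let S be a string of length n over an alphabet Σ with |Σ| ≥ 4, and P a substring of S. If the frequency of P in S can be reduced by y ≥ 1 via k substitutions with a letter # ∉ Σ, then the frequency of P in S can be reduced by at least y via k substitutions using only letters from Σ. -/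
open Classical

/-! Filling the `#`-positions (`none`) one at a time never creates an occurrence of `P`. The windows
through a position `j` that would become occurrences for a suitable letter at `j` are indexed by
their offsets `t` at `j`; for any three of them, `a < b < c`, the overlaps of the windows force
`P[a] = P[a + c - b] = P[c]`. Hence at most two letters are dangerous at `j`, and a third letter is
safe. Only positions that already differ from `S` are filled, so the Hamming distance does not
grow. -/

theorem Finset.card_image_le_two_of_forall_lt_lt {ι β : Type*} [LinearOrder ι] [DecidableEq β]
    (M : Finset ι) (f : ι → β)
    (h : ∀ a ∈ M, ∀ b ∈ M, ∀ c ∈ M, a < b → b < c → f a = f c) :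
    (M.image f).card ≤ 2 := by
  induction M using Finset.induction_on_max with
  | empty => simp
  | insert c M hc _ =>
    induction M using Finset.induction_on_max with
    | empty => simp
    | insert b M hb _ =>
      have hsub : (insert c (insert b M)).image f ⊆ {f c, f b} := by
        intro x hx
        simp only [Finset.mem_image, Finset.mem_insert] at hx
        obtain ⟨t, ht | ht | ht, rfl⟩ := hx
        · simp [ht]
        · simp [ht]
        · have hbc := hc b (by simp)
          have := h t (by simp [ht]) b (by simp) c (by simp) (hb t ht) hbc
          simp [this]
      exact (Finset.card_le_card hsub).trans (Finset.card_le_two)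

section Occurrences

variable {γ : Type*}

theorem occursAt_iff (Q T : List γ) (i : ℕ) :
    OccursAt Q T i ↔ i + Q.length ≤ T.length ∧ ∀ s < Q.length, T[i + s]? = Q[s]? := by
  constructor
  · rintro ⟨hlen, hQ⟩
    refine ⟨hlen, fun s hs => ?_⟩
    conv_rhs => rw [← hQ]
    rw [List.getElem?_take_of_lt hs, List.getElem?_drop]
  · rintro ⟨hlen, hQ⟩
    refine ⟨hlen, List.ext_getElem? fun s => ?_⟩
    by_cases hs : s < Q.length
    · rw [List.getElem?_take_of_lt hs, List.getElem?_drop, hQ s hs]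
    · rw [not_lt] at hs
      rw [List.getElem?_eq_none_iff.mpr ((List.length_take_le _ _).trans hs),
        List.getElem?_eq_none_iff.mpr hs]

theorem mem_occ_iff_s10 (Q T : List γ) (i : ℕ) :
    i ∈ occ Q T ↔ i + Q.length ≤ T.length ∧ ∀ s < Q.length, T[i + s]? = Q[s]? := by
  rw [occ, Finset.mem_filter, Finset.mem_range, occursAt_iff]
  exact and_iff_right_of_imp fun h => by omega

noncomputable def almostOccOffsets (Q T : List γ) (j : ℕ) : Finset ℕ :=
  (Finset.range Q.length).filter fun t =>
    t ≤ j ∧ ∀ s < Q.length, s ≠ t → T[j - t + s]? = Q[s]?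

theorem getElem?_eq_of_mem_almostOccOffsets {Q T : List γ} {j a b c : ℕ}
    (ha : a ∈ almostOccOffsets Q T j) (hb : b ∈ almostOccOffsets Q T j)
    (hc : c ∈ almostOccOffsets Q T j) (hab : a < b) (hbc : b < c) : Q[a]? = Q[c]? := by
  simp only [almostOccOffsets, Finset.mem_filter, Finset.mem_range] at ha hb hc
  obtain ⟨-, -, Wa⟩ := ha
  obtain ⟨-, hbj, Wb⟩ := hb
  obtain ⟨hcQ, hcj, Wc⟩ := hc
  calc Q[a]? = T[j - b + a]? := (Wb a (by omega) (by omega)).symm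
    _ = T[j - c + (a + c - b)]? := by congr 1; omega
    _ = Q[a + c - b]? := Wc _ (by omega) (by omega)
    _ = T[j - a + (a + c - b)]? := (Wa _ (by omega) (by omega)).symm
    _ = T[j - b + c]? := by congr 1; omega
    _ = Q[c]? := Wb c hcQ (by omega)

theorem card_image_almostOccOffsets_le_two [DecidableEq γ] (Q T : List γ) (j : ℕ) :
    ((almostOccOffsets Q T j).image (Q[·]?)).card ≤ 2 :=
  Finset.card_image_le_two_of_forall_lt_lt _ _ fun _ ha _ hb _ hc =>
    getElem?_eq_of_mem_almostOccOffsets ha hb hc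

theorem occ_set_subset [DecidableEq γ] (Q T : List γ) (j : ℕ) (x : γ)
    (hx : some x ∉ (almostOccOffsets Q T j).image (Q[·]?)) :
    occ Q (T.set j x) ⊆ occ Q T := by
  intro i hi
  rw [mem_occ_iff_s10] at hi ⊢
  rw [List.length_set] at hi
  obtain ⟨hlen, hmatch⟩ := hi
  have hagree : ∀ s < Q.length, i + s ≠ j → T[i + s]? = Q[s]? := fun s hs hne => by
    rw [← hmatch s hs, List.getElem?_set_ne (Ne.symm hne)]
  by_cases hcov : i ≤ j ∧ j < i + Q.length
  · refine absurd (Finset.mem_image.mpr ⟨j - i, ?_, ?_⟩) hx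
    · simp only [almostOccOffsets, Finset.mem_filter, Finset.mem_range]
      refine ⟨by omega, by omega, fun s hs hst => ?_⟩
      rw [show j - (j - i) + s = i + s by omega]
      exact hagree s hs (by omega)
    · have := hmatch (j - i) (by omega)
      rwa [show i + (j - i) = j by omega, List.getElem?_set_self (by omega), eq_comm] at this
  · exact ⟨hlen, fun s hs => hagree s hs (by omega)⟩

end Occurrences

section Holes

variable {α : Type*}

theorem occ_map_some (P S : List α) : occ (P.map some) (S.map some) = occ P S := by
  ext i
  simp only [mem_occ_iff_s10, List.length_map, List.getElem?_map,
    (Option.map_injective (Option.some_injective α)).eq_iff]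

theorem exists_map_some_eq (T : List (Option α)) (hT : ∀ o ∈ T, o ≠ none) :
    ∃ U : List α, U.map some = T := by
  induction T with
  | nil => exact ⟨[], rfl⟩
  | cons o T ih =>
    obtain ⟨a, rfl⟩ := Option.ne_none_iff_exists'.mp (hT o List.mem_cons_self)
    obtain ⟨U, rfl⟩ := ih fun o ho => hT o (List.mem_cons_of_mem _ ho)
    exact ⟨a :: U, rfl⟩

theorem exists_occ_set_some_subset [Fintype α] (hcard : 3 ≤ Fintype.card α) (P : List α)
    (T : List (Option α)) (j : ℕ) :
    ∃ c : α, occ (P.map some) (T.set j (some c)) ⊆ occ (P.map some) T := by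
  have hF := card_image_almostOccOffsets_le_two (P.map some) T j
  obtain ⟨_, hmem, hnot⟩ := Finset.exists_mem_notMem_of_card_lt_card
    (s := (almostOccOffsets (P.map some) T j).image ((P.map some)[·]?))
    (t := (Finset.univ : Finset α).map (Function.Embedding.some.trans Function.Embedding.some))
    (by rw [Finset.card_map, Finset.card_univ]; omega)
  obtain ⟨c, -, rfl⟩ := Finset.mem_map.mp hmem
  exact ⟨c, occ_set_subset _ T j (some c) hnot⟩

theorem exists_fill_holes [Fintype α] (hcard : 3 ≤ Fintype.card α) (P : List α)
    (T : List (Option α)) :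
    ∃ U : List α, U.length = T.length ∧
      (∀ (i : ℕ) (a : α), T[i]? = some (some a) → U[i]? = some a) ∧
      (occ P U).card ≤ (occ (P.map some) T).card := by
  induction hN : T.countP (·.isNone) generalizing T with
  | zero =>
    have hT : ∀ o ∈ T, o ≠ none := by
      simpa [List.countP_eq_zero, Option.isNone_iff_eq_none] using hN
    obtain ⟨U, rfl⟩ := exists_map_some_eq T hT
    refine ⟨U, (List.length_map _).symm, fun i a h => by simpa using h, by rw [occ_map_some]⟩
  | succ N ih =>
    obtain ⟨o, ho, hnone⟩ := List.countP_pos_iff.mp (show 0 < T.countP (·.isNone) by omega)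
    obtain ⟨j, hj, rfl⟩ := List.getElem_of_mem ho
    obtain ⟨c, hsub⟩ := exists_occ_set_some_subset hcard P T j
    have hN' : (T.set j (some c)).countP (·.isNone) = N := by
      rw [List.countP_set hj, hN, if_pos hnone]
      simp
    obtain ⟨U, hlen, hagree, hocc⟩ := ih (T.set j (some c)) hN'
    refine ⟨U, hlen.trans (List.length_set ..), fun i a h => hagree i a ?_,
      hocc.trans (Finset.card_le_card hsub)⟩
    rwa [List.getElem?_set_ne]
    rintro rfl
    simp [List.getElem?_eq_getElem hj, Option.isNone_iff_eq_none.mp hnone] at h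

theorem hamming_le_of_agree (S U : List α) (T : List (Option α))
    (hagree : ∀ (i : ℕ) (a : α), T[i]? = some (some a) → U[i]? = some a) :
    hamming S U ≤ hamming (S.map some) T := by
  unfold hamming
  rw [List.length_map, ← List.countP_eq_length_filter, ← List.countP_eq_length_filter]
  refine List.countP_mono_left fun i hi hne => ?_
  simp only [decide_eq_true_eq, List.getElem?_map] at hne ⊢
  obtain ⟨s, hs⟩ : ∃ s, S[i]? = some s :=
    ⟨_, List.getElem?_eq_getElem (List.mem_range.mp hi)⟩
  rw [hs] at hne ⊢
  exact fun hT => hne (hagree i s hT.symm).symm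

end Holes

theorem stmt10_general {α : Type*} [Fintype α] (hcard : 4 ≤ Fintype.card α)
    (S P : List α) (k y : ℕ)
    (h : ∃ S₁ : List (Option α), S₁.length = S.length ∧
        hamming (S.map some) S₁ ≤ k ∧ (occ (P.map some) S₁).card + y ≤ (occ P S).card) :
    ∃ S₂ : List α, S₂.length = S.length ∧ hamming S S₂ ≤ k ∧
      (occ P S₂).card + y ≤ (occ P S).card := by
  obtain ⟨S₁, hlen, hham, hocc⟩ := h
  obtain ⟨S₂, hlen₂, hagree, hocc₂⟩ := exists_fill_holes (by omega) P S₁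
  exact ⟨S₂, hlen₂.trans hlen, (hamming_le_of_agree S S₂ S₁ hagree).trans hham,
    by omega⟩

theorem stmt10 {α : Type*} [Fintype α] (hcard : 4 ≤ Fintype.card α)
    (S P : List α) (hsub : (occ P S).Nonempty) (k y : ℕ) (hy : 1 ≤ y)
    (h : ∃ S₁ : List (Option α), S₁.length = S.length ∧
        hamming (S.map some) S₁ ≤ k ∧ (occ (P.map some) S₁).card + y ≤ (occ P S).card) :
    ∃ S₂ : List α, S₂.length = S.length ∧ hamming S S₂ ≤ k ∧
      (occ P S₂).card + y ≤ (occ P S).card :=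
  stmt10_general hcard S P k y h
end

section
/- Let S be a string, P an aperiodic substring of S, and k a nonnegative integer. Any string S' with d_H(S,S') ≤ k contains at least |occ_S(P)| − 2k occurrences of P. Consequently, if |occ_S(P)| ≥ τ + 2k, then P is (τ,k)-resilient in S. -/
open Classical

/-! Two occurrences of `P` starting at `a < b` and overlapping force `b - a` to be a period of `P`.
If `P` is aperiodic, three occurrences covering a common position would start within less than
`|P| < 2 · per(P)` of each other while being pairwise `per(P)` apart, which is impossible.
Hence each of the at most `k` mismatches between `S` and `S'` destroys at most two occurrences,
and every other occurrence of `P` in `S` survives in `S'`. -/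

theorem Finset.card_le_two_of_gap_of_span {s : Finset ℕ} {p : ℕ}
    (hgap : ∀ a ∈ s, ∀ b ∈ s, a < b → p ≤ b - a) (hspan : ∀ a ∈ s, ∀ b ∈ s, b - a < 2 * p) :
    s.card ≤ 2 := by
  by_contra! h
  obtain ⟨x, hx, y, hy, z, hz, hxy, hxz, hyz⟩ := Finset.two_lt_card.mp h
  have := hgap x hx y hy; have := hgap y hy x hx; have := hgap x hx z hz
  have := hgap z hz x hx; have := hgap y hy z hz; have := hgap z hz y hy
  have := hspan x hx y hy; have := hspan y hy x hx; have := hspan x hx z hz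
  have := hspan z hz x hx; have := hspan y hy z hz; have := hspan z hz y hy
  omega

section Occurrences

variable {α : Type*} {P S S' : List α} {i : ℕ}

theorem mem_occ : i ∈ occ P S ↔ OccursAt P S i := by
  refine ⟨fun h => (Finset.mem_filter.mp h).2, fun h => Finset.mem_filter.mpr ⟨?_, h⟩⟩
  have := h.1
  exact Finset.mem_range.mpr (by omega)

theorem OccursAt.getElem?_eq_s12 (h : OccursAt P S i) {m : ℕ} (hm : m < P.length) :
    S[i + m]? = P[m]? := by
  conv_rhs => rw [← h.2]
  simp [List.getElem?_drop, hm]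

theorem OccursAt.isPeriodOf_sub_s12 {a b : ℕ} (ha : OccursAt P S a) (hb : OccursAt P S b)
    (hab : a < b) : IsPeriodOf P (b - a) := by
  refine ⟨Nat.sub_pos_of_lt hab, fun m hm => ?_⟩
  rw [← hb.getElem?_eq_s12 (by omega), ← ha.getElem?_eq_s12 hm]
  congr 1
  omega

theorem OccursAt.of_forall_getElem?_eq (h : OccursAt P S i) (hlen : S'.length = S.length)
    (hagree : ∀ m < P.length, S[i + m]? = S'[i + m]?) : OccursAt P S' i := by
  refine ⟨hlen ▸ h.1, List.ext_getElem?' fun m hm => ?_⟩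
  simp only [List.length_take, List.length_drop] at hm
  rw [← h.getElem?_eq_s12 (by omega), hagree m (by omega)]
  simp [List.getElem?_drop, show m < P.length by omega]

noncomputable def occCovering (P S : List α) (j : ℕ) : Finset ℕ :=
  (occ P S).filter fun i => i ≤ j ∧ j < i + P.length

theorem card_occCovering_le_two (hP : ¬ ListPeriodic P) (j : ℕ) :
    (occCovering P S j).card ≤ 2 := by
  have hlt : P.length < 2 * minPeriod P := not_le.mp hP
  refine Finset.card_le_two_of_gap_of_span (p := minPeriod P) ?_ ?_ <;>
    simp only [occCovering, Finset.mem_filter, mem_occ]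
  · rintro a ⟨ha, -⟩ b ⟨hb, -⟩ hab
    exact Nat.sInf_le (ha.isPeriodOf_sub_s12 hb hab)
  · rintro a ⟨-, -, ha⟩ b ⟨-, hb, -⟩
    omega

noncomputable def mismatches (S T : List α) : Finset ℕ :=
  ((List.range S.length).filter fun i => S[i]? ≠ T[i]?).toFinset

theorem card_mismatches_le (S T : List α) : (mismatches S T).card ≤ hamming S T :=
  List.toFinset_card_le _

theorem occ_sdiff_subset_biUnion (hlen : S'.length = S.length) :
    occ P S \ occ P S' ⊆ (mismatches S S').biUnion (occCovering P S) := by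
  intro i hi
  obtain ⟨hiS, hiS'⟩ := Finset.mem_sdiff.mp hi
  rw [mem_occ] at hiS hiS'
  obtain ⟨m, hm, hne⟩ : ∃ m < P.length, S[i + m]? ≠ S'[i + m]? := by
    by_contra! hagree
    exact hiS' (hiS.of_forall_getElem?_eq hlen hagree)
  have := hiS.1
  simp only [Finset.mem_biUnion, mismatches, List.mem_toFinset, List.mem_filter, List.mem_range,
    occCovering, Finset.mem_filter, mem_occ]
  exact ⟨i + m, ⟨by omega, decide_eq_true hne⟩, hiS, by omega, by omega⟩

theorem card_occ_sdiff_le (hP : ¬ ListPeriodic P) (hlen : S'.length = S.length) :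
    (occ P S \ occ P S').card ≤ 2 * hamming S S' :=
  calc (occ P S \ occ P S').card
      ≤ ((mismatches S S').biUnion (occCovering P S)).card :=
        Finset.card_le_card (occ_sdiff_subset_biUnion hlen)
    _ ≤ ∑ j ∈ mismatches S S', (occCovering P S j).card := Finset.card_biUnion_le
    _ ≤ (mismatches S S').card * 2 :=
        Finset.sum_le_card_nsmul _ _ _ fun j _ => card_occCovering_le_two hP j
    _ ≤ 2 * hamming S S' := by linarith [card_mismatches_le S S']

theorem card_occ_sub_le (hP : ¬ ListPeriodic P) (hlen : S'.length = S.length) :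
    (occ P S).card - 2 * hamming S S' ≤ (occ P S').card := by
  have := card_occ_sdiff_le hP hlen
  have : (occ P S).card ≤ (occ P S \ occ P S').card + (occ P S').card :=
    Finset.card_le_card_sdiff_add_card
  omega

end Occurrences

theorem stmt12_general {α : Type*} (S P : List α) (hap : ¬ ListPeriodic P)
    (τ k : ℕ) :
    (∀ S' : List α, S'.length = S.length → hamming S S' ≤ k →
      (occ P S).card - 2 * k ≤ (occ P S').card) ∧
    (τ + 2 * k ≤ (occ P S).card → Resilient P S τ k) := by
  have survive : ∀ S' : List α, S'.length = S.length → hamming S S' ≤ k →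
      (occ P S).card - 2 * k ≤ (occ P S').card := fun S' hlen hk => by
    have := card_occ_sub_le hap hlen
    omega
  refine ⟨survive, fun hτ S' hlen hk => ?_⟩
  have := survive S' hlen hk
  omega

theorem stmt12 {α : Type*} (S P : List α) (hap : ¬ ListPeriodic P)
    (hsub : (occ P S).Nonempty) (τ k : ℕ) :
    (∀ S' : List α, S'.length = S.length → hamming S S' ≤ k →
      (occ P S).card - 2 * k ≤ (occ P S').card) ∧
    (τ + 2 * k ≤ (occ P S).card → Resilient P S τ k) :=
  stmt12_general S P hap τ k
end

section
/- Let F be a family of f intervals on the real line such that every point of the line is contained in at most two intervals of F. Then for any budget t, the maximum number of intervals of F that can be intersected (stabbed) by t points equals the value computed by the greedy algorithm that repeatedly, scanning the intervals in left-to-right order of left endpoints, stabs the overlap of two consecutive overlapping not-yet-stabbed intervals while budget and such pairs remain, and then stabs remaining intervals one point each. -/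
open Classical

/-- The greedy left-to-right pairing of consecutive overlapping intervals,
capped at budget `t`. -/
noncomputable def greedyPairsR : List (ℝ × ℝ) → ℕ → ℕ
  | _, 0 => 0
  | [], _ + 1 => 0
  | [_], _ + 1 => 0
  | I :: J :: rest, t + 1 =>
    if J.1 ≤ I.2 then 1 + greedyPairsR rest t
    else greedyPairsR (J :: rest) (t + 1)

/-!
A point stabs at most two intervals, and when it stabs two of them they can be charged to a pair
of consecutive overlapping intervals. Upper bound, by induction along the sorted list: if the
first two intervals `I, J` overlap, deleting a point of `Q` that stabs one of them loses at most
two stabbed intervals (when `I` and `J` are stabbed by different points, the one in `I` lies to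
the left of `J`, hence of all later intervals); if they do not overlap, a point stabbing `I` stabs
nothing else. Lower bound: the greedy choice of points attains the bound, since each of its points
stabs a new interval and each point placed in an overlap stabs two.
-/

theorem greedyPairsR_le (M : List (ℝ × ℝ)) (t : ℕ) : greedyPairsR M t ≤ t := by
  fun_induction greedyPairsR M t <;> omega

theorem greedyPairsR_le_succ (M : List (ℝ × ℝ)) (t : ℕ) :
    greedyPairsR M t ≤ greedyPairsR M (t + 1) := by
  fun_induction greedyPairsR M t <;> grind [greedyPairsR]

theorem greedyPairsR_succ_le (M : List (ℝ × ℝ)) (t : ℕ) :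
    greedyPairsR M (t + 1) ≤ greedyPairsR M t + 1 := by
  fun_induction greedyPairsR M t <;> grind [greedyPairsR, greedyPairsR_le]

section

variable {α : Type*} [LinearOrder α]

def numStabbed (M : List (α × α)) (Q : Finset α) : ℕ :=
  (M.filter fun I => ∃ q ∈ Q, I.1 ≤ q ∧ q ≤ I.2).length

namespace numStabbed

@[simp] theorem nil (Q : Finset α) : numStabbed [] Q = 0 := rfl

@[simp] theorem empty (M : List (α × α)) : numStabbed M ∅ = 0 := by
  simp [numStabbed]

theorem append (M N : List (α × α)) (Q : Finset α) :
    numStabbed (M ++ N) Q = numStabbed M Q + numStabbed N Q := by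
  simp [numStabbed]

theorem cons_of_stabbed {I : α × α} (M : List (α × α)) {Q : Finset α}
    (h : ∃ q ∈ Q, I.1 ≤ q ∧ q ≤ I.2) : numStabbed (I :: M) Q = numStabbed M Q + 1 := by
  simp [numStabbed, h]

theorem cons_of_not_stabbed {I : α × α} (M : List (α × α)) {Q : Finset α}
    (h : ¬∃ q ∈ Q, I.1 ≤ q ∧ q ≤ I.2) : numStabbed (I :: M) Q = numStabbed M Q := by
  simp [numStabbed, h]

theorem cons_le (I : α × α) (M : List (α × α)) (Q : Finset α) :
    numStabbed (I :: M) Q ≤ numStabbed M Q + 1 := by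
  by_cases h : ∃ q ∈ Q, I.1 ≤ q ∧ q ≤ I.2
  · exact (cons_of_stabbed M h).le
  · exact (cons_of_not_stabbed M h).le.trans (Nat.le_succ _)

theorem le_length (M : List (α × α)) (Q : Finset α) : numStabbed M Q ≤ M.length :=
  List.length_filter_le _ _

theorem mono_left {M N : List (α × α)} (h : M.Sublist N) (Q : Finset α) :
    numStabbed M Q ≤ numStabbed N Q :=
  (h.filter _).length_le

theorem mono_right (M : List (α × α)) {Q Q' : Finset α} (h : Q ⊆ Q') :
    numStabbed M Q ≤ numStabbed M Q' := by
  simp only [numStabbed, ← List.countP_eq_length_filter]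
  refine List.countP_mono_left fun I _ => ?_
  simp only [decide_eq_true_eq]
  exact fun ⟨q, hq, hqI⟩ => ⟨q, h hq, hqI⟩

theorem singleton (M : List (α × α)) (x : α) :
    numStabbed M {x} = (M.filter fun I => I.1 ≤ x ∧ x ≤ I.2).length := by
  simp [numStabbed]

theorem union_le (M : List (α × α)) (Q Q' : Finset α) :
    numStabbed M (Q ∪ Q') ≤ numStabbed M Q + numStabbed M Q' := by
  induction M with
  | nil => simp
  | cons I M ih =>
    have hcons := cons_le I M (Q ∪ Q')
    have hQM := mono_left (List.sublist_cons_self I M) Q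
    have hQ'M := mono_left (List.sublist_cons_self I M) Q'
    by_cases hQ : ∃ q ∈ Q, I.1 ≤ q ∧ q ≤ I.2
    · rw [cons_of_stabbed M hQ]
      omega
    by_cases hQ' : ∃ q ∈ Q', I.1 ≤ q ∧ q ≤ I.2
    · rw [cons_of_stabbed M hQ']
      omega
    have : ¬∃ q ∈ Q ∪ Q', I.1 ≤ q ∧ q ≤ I.2 := by
      simp only [Finset.mem_union]
      grind
    rw [cons_of_not_stabbed M hQ, cons_of_not_stabbed M hQ', cons_of_not_stabbed M this]
    exact ih

theorem le_erase_add (M : List (α × α)) (Q : Finset α) (q : α) :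
    numStabbed M Q ≤ numStabbed M (Q.erase q) + numStabbed M {q} := by
  calc numStabbed M Q ≤ numStabbed M ({q} ∪ Q.erase q) :=
        mono_right M (Finset.insert_eq q _ ▸ Finset.insert_erase_subset q Q)
    _ ≤ numStabbed M (Q.erase q) + numStabbed M {q} := (union_le M _ _).trans_eq (add_comm _ _)

theorem singleton_eq_zero_of_lt {M : List (α × α)} {q : α} (h : ∀ K ∈ M, q < K.1) :
    numStabbed M {q} = 0 := by
  simp only [singleton, List.length_eq_zero_iff, List.filter_eq_nil_iff]
  grind

theorem le_cons_insert {I : α × α} (M : List (α × α)) (Q : Finset α) {x : α}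
    (hx : I.1 ≤ x ∧ x ≤ I.2) : numStabbed M Q + 1 ≤ numStabbed (I :: M) (insert x Q) := by
  rw [cons_of_stabbed M ⟨x, Finset.mem_insert_self x Q, hx⟩]
  exact Nat.add_le_add_right (mono_right M (Finset.subset_insert x Q)) 1

end numStabbed

theorem lt_or_mem_or_mem_of_le {I J : α × α} {p q : α}
    (hIJ : I.1 ≤ J.1) (hp : I.1 ≤ p ∧ p ≤ I.2) (hq : J.1 ≤ q ∧ q ≤ J.2) :
    p < J.1 ∨ (J.1 ≤ p ∧ p ≤ J.2) ∨ (I.1 ≤ q ∧ q ≤ I.2) := by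
  rcases lt_or_ge p J.1 with hpJ | hJp
  · exact .inl hpJ
  rcases le_or_gt p J.2 with hpJ | hJp'
  · exact .inr (.inl ⟨hJp, hpJ⟩)
  · exact .inr (.inr ⟨hIJ.trans hq.1, hq.2.trans (hJp'.le.trans hp.2)⟩)

theorem exists_numStabbed_cons_cons_le_erase {I J : α × α} {rest : List (α × α)} {Q : Finset α}
    (hIJ : I.1 ≤ J.1) (hJrest : ∀ K ∈ rest, J.1 ≤ K.1)
    (hthin : ∀ x, numStabbed (I :: J :: rest) {x} ≤ 2)
    (hQ : ∃ q ∈ Q, (I.1 ≤ q ∧ q ≤ I.2) ∨ (J.1 ≤ q ∧ q ≤ J.2)) :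
    ∃ q ∈ Q, numStabbed (I :: J :: rest) Q ≤ numStabbed rest (Q.erase q) + 2 := by
  suffices h : ∃ q ∈ Q, numStabbed [I, J] Q + numStabbed rest {q} ≤ 2 by
    obtain ⟨q, hq, hle⟩ := h
    refine ⟨q, hq, ?_⟩
    have := numStabbed.le_erase_add rest Q q
    have := numStabbed.append [I, J] rest Q
    simp only [List.cons_append, List.nil_append] at this
    omega
  have hpair : numStabbed [I, J] Q ≤ 2 := numStabbed.le_length [I, J] Q
  by_cases hboth : ∃ q ∈ Q, (I.1 ≤ q ∧ q ≤ I.2) ∧ (J.1 ≤ q ∧ q ≤ J.2)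
  · obtain ⟨q, hq, hqI, hqJ⟩ := hboth
    have := hthin q
    rw [numStabbed.cons_of_stabbed _ ⟨q, Finset.mem_singleton_self q, hqI⟩,
      numStabbed.cons_of_stabbed _ ⟨q, Finset.mem_singleton_self q, hqJ⟩] at this
    exact ⟨q, hq, by omega⟩
  by_cases hearly : ∃ q ∈ Q, (I.1 ≤ q ∧ q ≤ I.2) ∧ q < J.1
  · obtain ⟨q, hq, -, hqJ⟩ := hearly
    refine ⟨q, hq, ?_⟩
    rw [numStabbed.singleton_eq_zero_of_lt fun K hK => hqJ.trans_le (hJrest K hK)]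
    exact hpair
  have hpair : numStabbed [I, J] Q ≤ 1 := by
    by_cases hI : ∃ q ∈ Q, I.1 ≤ q ∧ q ≤ I.2
    · have hJ : ¬∃ q ∈ Q, J.1 ≤ q ∧ q ≤ J.2 := by
        rintro ⟨q', hq', hq'J⟩
        obtain ⟨q, hq, hqI⟩ := hI
        rcases lt_or_mem_or_mem_of_le hIJ hqI hq'J with h | h | h
        exacts [hearly ⟨q, hq, hqI, h⟩, hboth ⟨q, hq, hqI, h⟩, hboth ⟨q', hq', h, hq'J⟩]
      rw [numStabbed.cons_of_stabbed _ hI, numStabbed.cons_of_not_stabbed _ hJ]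
      simp
    · rw [numStabbed.cons_of_not_stabbed _ hI]
      simpa using numStabbed.le_length [J] Q
  obtain ⟨q, hq, hqIJ⟩ := hQ
  refine ⟨q, hq, ?_⟩
  have hq1 : numStabbed rest {q} + 1 ≤ numStabbed (I :: J :: rest) {q} := by
    have hJ := numStabbed.mono_left (List.sublist_cons_self I (J :: rest)) {q}
    rcases hqIJ with hqI | hqJ
    · rw [numStabbed.cons_of_stabbed _ ⟨q, Finset.mem_singleton_self q, hqI⟩]
      have := numStabbed.mono_left (List.sublist_cons_self J rest) {q}
      omega
    · rw [numStabbed.cons_of_stabbed _ ⟨q, Finset.mem_singleton_self q, hqJ⟩] at hJ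
      exact hJ
  have := hthin q
  omega

end

theorem numStabbed_le_greedyPairsR_add :
    ∀ (M : List (ℝ × ℝ)), M.Pairwise (fun I J => I.1 ≤ J.1) →
      (∀ x, numStabbed M {x} ≤ 2) → ∀ (t : ℕ) (Q : Finset ℝ), Q.card ≤ t →
      numStabbed M Q ≤ greedyPairsR M t + t
  | M, _, _, 0, Q, hQ => by simp [Finset.card_eq_zero.mp (Nat.le_zero.mp hQ)]
  | [], _, _, _ + 1, Q, _ => by simp
  | [I], _, _, t + 1, Q, _ => (numStabbed.le_length [I] Q).trans (by simp [greedyPairsR])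
  | I :: J :: rest, hsort, hthin, t + 1, Q, hQ => by
    have hIJ : I.1 ≤ J.1 := List.rel_of_pairwise_cons hsort (by simp)
    have hJrest : ∀ K ∈ rest, J.1 ≤ K.1 := fun K => List.rel_of_pairwise_cons hsort.of_cons
    have hthinJ : ∀ x, numStabbed (J :: rest) {x} ≤ 2 :=
      fun x => (numStabbed.mono_left (by simp) _).trans (hthin x)
    have hthinrest : ∀ x, numStabbed rest {x} ≤ 2 :=
      fun x => (numStabbed.mono_left (by simp) _).trans (hthin x)
    by_cases hov : J.1 ≤ I.2
    · rw [greedyPairsR.eq_4, if_pos hov]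
      by_cases hIJQ : ∃ q ∈ Q, (I.1 ≤ q ∧ q ≤ I.2) ∨ (J.1 ≤ q ∧ q ≤ J.2)
      · obtain ⟨q, hq, hle⟩ := exists_numStabbed_cons_cons_le_erase hIJ hJrest hthin hIJQ
        have := numStabbed_le_greedyPairsR_add rest hsort.of_cons.of_cons hthinrest t (Q.erase q)
          (by rw [Finset.card_erase_of_mem hq]; omega)
        omega
      · rw [numStabbed.cons_of_not_stabbed _ fun ⟨q, hq, hqI⟩ => hIJQ ⟨q, hq, .inl hqI⟩,
          numStabbed.cons_of_not_stabbed _ fun ⟨q, hq, hqJ⟩ => hIJQ ⟨q, hq, .inr hqJ⟩]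
        have := numStabbed_le_greedyPairsR_add rest hsort.of_cons.of_cons hthinrest (t + 1) Q hQ
        have := greedyPairsR_succ_le rest t
        omega
    · rw [greedyPairsR.eq_4, if_neg hov]
      by_cases hI : ∃ q ∈ Q, I.1 ≤ q ∧ q ≤ I.2
      · obtain ⟨q, hq, hqI⟩ := hI
        have hq0 : numStabbed (J :: rest) {q} = 0 := by
          refine numStabbed.singleton_eq_zero_of_lt fun K hK => ?_
          have hqJ : q < J.1 := hqI.2.trans_lt (not_le.mp hov)
          rcases List.mem_cons.mp hK with rfl | hK
          exacts [hqJ, hqJ.trans_le (hJrest K hK)]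
        have := numStabbed.le_erase_add (J :: rest) Q q
        have := numStabbed_le_greedyPairsR_add (J :: rest) hsort.of_cons hthinJ t (Q.erase q)
          (by rw [Finset.card_erase_of_mem hq]; omega)
        have := greedyPairsR_le_succ (J :: rest) t
        rw [numStabbed.cons_of_stabbed _ ⟨q, hq, hqI⟩]
        omega
      · rw [numStabbed.cons_of_not_stabbed _ hI]
        exact numStabbed_le_greedyPairsR_add (J :: rest) hsort.of_cons hthinJ (t + 1) Q hQ
termination_by M => M.length

theorem exists_numStabbed_ge_greedyPairsR :
    ∀ (M : List (ℝ × ℝ)), (∀ I ∈ M, I.1 ≤ I.2) → M.Pairwise (fun I J => I.1 ≤ J.1) →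
      ∀ t : ℕ, ∃ Q : Finset ℝ, Q.card ≤ t ∧
        min M.length (greedyPairsR M t + t) ≤ numStabbed M Q ∧
        Q.card + greedyPairsR M t ≤ numStabbed M Q
  | _, _, _, 0 => ⟨∅, by simp [greedyPairsR]⟩
  | [], _, _, _ + 1 => ⟨∅, by simp [greedyPairsR]⟩
  | [I], hvalid, _, t + 1 => by
    have := numStabbed.le_cons_insert [] ∅ ⟨le_rfl, hvalid I (by simp)⟩
    exact ⟨{I.1}, by simp, by simp_all [greedyPairsR]⟩
  | I :: J :: rest, hvalid, hsort, t + 1 => by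
    have hIJ : I.1 ≤ J.1 := List.rel_of_pairwise_cons hsort (by simp)
    by_cases hov : J.1 ≤ I.2
    · obtain ⟨Q, hQt, hmin, hcard⟩ := exists_numStabbed_ge_greedyPairsR rest
        (fun K hK => hvalid K (by simp [hK])) hsort.of_cons.of_cons t
      have hJ := numStabbed.le_cons_insert rest Q ⟨le_rfl, hvalid J (by simp)⟩
      have hI := numStabbed.cons_of_stabbed (I := I) (J :: rest)
        ⟨J.1, Finset.mem_insert_self J.1 Q, hIJ, hov⟩
      have := Finset.card_insert_le J.1 Q
      rw [greedyPairsR.eq_4, if_pos hov, List.length_cons, List.length_cons]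
      exact ⟨insert J.1 Q, by omega, by omega, by omega⟩
    · obtain ⟨Q, hQt, hmin, hcard⟩ := exists_numStabbed_ge_greedyPairsR (J :: rest)
        (fun K hK => hvalid K (by simp [hK])) hsort.of_cons (t + 1)
      rw [greedyPairsR.eq_4, if_neg hov, List.length_cons]
      by_cases hQ : Q.card ≤ t
      · have hI := numStabbed.le_cons_insert (J :: rest) Q ⟨le_rfl, hvalid I (by simp)⟩
        have := Finset.card_insert_le I.1 Q
        exact ⟨insert I.1 Q, by omega, by omega, by omega⟩
      · have := numStabbed.mono_left (List.sublist_cons_self I (J :: rest)) Q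
        exact ⟨Q, hQt, by omega, by omega⟩
termination_by M => M.length

theorem stmt19 (L : List (ℝ × ℝ)) (hvalid : ∀ I ∈ L, I.1 ≤ I.2)
    (hsort : L.Pairwise (fun I J => I.1 ≤ J.1))
    (hthin : ∀ x : ℝ, (L.filter (fun I => I.1 ≤ x ∧ x ≤ I.2)).length ≤ 2)
    (t : ℕ) :
    IsGreatest {d : ℕ | ∃ Q : Finset ℝ, Q.card ≤ t ∧
        d = (L.filter (fun I => ∃ q ∈ Q, I.1 ≤ q ∧ q ≤ I.2)).length}
      (min L.length (2 * greedyPairsR L t + (t - greedyPairsR L t))) := by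
  have hgt := greedyPairsR_le L t
  rw [show 2 * greedyPairsR L t + (t - greedyPairsR L t) = greedyPairsR L t + t by omega]
  have upper (Q : Finset ℝ) (hQ : Q.card ≤ t) :
      numStabbed L Q ≤ min L.length (greedyPairsR L t + t) :=
    le_min (numStabbed.le_length L Q) <| numStabbed_le_greedyPairsR_add L hsort
      (fun x => (numStabbed.singleton L x).trans_le (hthin x)) t Q hQ
  obtain ⟨Q, hQt, hQ, -⟩ := exists_numStabbed_ge_greedyPairsR L hvalid hsort t
  refine ⟨⟨Q, hQt, le_antisymm hQ (upper Q hQt)⟩, ?_⟩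
  rintro d ⟨Q', hQ't, rfl⟩
  exact upper Q' hQ't
end
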